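/- arXiv:2204.03019 — 7 statements merged into one kernel-verified Lean document; each statement's English description precedes it below -/
import Mathlib

section
/- Let ι : B → A be a homomorphism of monoids with A a group. If there exists a map q : A → B satisfying (ZL1) q(1)=1, (ZL2) q(ι(b)·a) = b·q(a), and (ZL3) q(a·a') = q(a·ι(q(a'))), then every element of B is invertible, i.e., B is a group. -/
/-- if `A` is a group and there is a map `q : A → B` satisfying
(ZL1)-(ZL3), then every element of the monoid `B` is invertible. -/
theorem stmt6 {B A : Type*} [Monoid B] [Group A] (ι : B →* A) (q : A → B)
    (hZL1 : q 1 = 1)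
    (hZL2 : ∀ (b : B) (a : A), q (ι b * a) = b * q a)
    (hZL3 : ∀ a a' : A, q (a * a') = q (a * ι (q a'))) :
    ∀ b : B, IsUnit b := by
  have hr : ∀ b : B, b * q ((ι b)⁻¹) = 1 := by
    intro b
    rw [← hZL2, mul_inv_cancel, hZL1]
  intro b
  set c := q ((ι b)⁻¹) with hc
  have hbc : b * c = 1 := hr b
  have hcd : c * q ((ι c)⁻¹) = 1 := hr c
  have hcb : c * b = 1 := by
    calc c * b = c * b * (c * q ((ι c)⁻¹)) := by rw [hcd, mul_one]
    _ = c * (b * c) * q ((ι c)⁻¹) := by group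
    _ = 1 := by rw [hbc, mul_one, hcd]
  exact ⟨⟨b, c, hbc, hcb⟩, rfl⟩
end

section
/- Let ι : B → A be a group homomorphism and q : A → B a map satisfying (ZL1) q(1)=1, (ZL2) q(ι(b)·a)=b·q(a), and (ZL3) q(a·a')=q(a·ι(q(a'))). Then Ker(q) = {a ∈ A : q(a) = 1} is a subgroup of A. -/
/-- for a group homomorphism `ι : B → A` and a map `q : A → B` satisfying
(ZL1)-(ZL3), the set `Ker q = {a | q a = 1}` is a subgroup of `A`. -/
theorem stmt8 {B A : Type*} [Group B] [Group A] (ι : B →* A) (q : A → B)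
    (hZL1 : q 1 = 1)
    (hZL2 : ∀ (b : B) (a : A), q (ι b * a) = b * q a)
    (hZL3 : ∀ a a' : A, q (a * a') = q (a * ι (q a'))) :
    ∃ K : Subgroup A, ∀ a : A, a ∈ K ↔ q a = 1 := by
  refine ⟨{ carrier := {a | q a = 1}
            one_mem' := hZL1
            mul_mem' := ?_
            inv_mem' := ?_ }, fun a => Iff.rfl⟩
  · intro a a' ha ha'
    have := hZL3 a a'
    simp only [Set.mem_setOf_eq] at ha ha' ⊢
    rw [ha', map_one, mul_one] at this
    rw [this, ha]
  · intro a ha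
    simp only [Set.mem_setOf_eq] at ha ⊢
    have := hZL3 a⁻¹ a
    rw [ha, map_one, mul_one, inv_mul_cancel, hZL1] at this
    exact this.symm
end

section
/- Let ι : B → A be an injective group homomorphism. The assignment q ↦ Ker(q) is a bijection between the set of maps q : A → B satisfying (ZL1), (ZL2), (ZL3) and the set of complements to ι(B) in A. Its inverse sends a complement X to the map q_X defined by q_X(a) = b where a = ι(b)·x is the unique such decomposition with b ∈ B, x ∈ X. -/
namespace Stmt10Aux

variable {B A : Type*} [Group B] [Group A] (ι : B →* A)

/-- The type of descent 1-cocycles. -/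
abbrev Cocycle := {q : A → B // q 1 = 1 ∧ (∀ (b : B) (a : A), q (ι b * a) = b * q a) ∧
    (∀ a a' : A, q (a * a') = q (a * ι (q a')))}

/-- The type of complements. -/
abbrev Complement := {X : Subgroup A // (∀ a : A, ∃ (b : B), ∃ x ∈ X, a = ι b * x) ∧
    (∀ x ∈ X, x ∈ Set.range ι → x = 1)}

/-- The kernel of a descent 1-cocycle, as a subgroup. -/
def kerSub (q : A → B) (hq1 : q 1 = 1)
    (hq3 : ∀ a a' : A, q (a * a') = q (a * ι (q a'))) : Subgroup A where
  carrier := {a | q a = 1}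
  one_mem' := hq1
  mul_mem' := by
    intro x y hx hy
    simp only [Set.mem_setOf_eq] at *
    rw [hq3, hy, map_one, mul_one, hx]
  inv_mem' := by
    intro x hx
    simp only [Set.mem_setOf_eq] at *
    have h := hq3 x⁻¹ x
    rw [inv_mul_cancel, hq1, hx, map_one, mul_one] at h
    exact h.symm

/-- Forward map: cocycle to its kernel. -/
def toKer (q : Cocycle ι) : Complement ι := by
  obtain ⟨q, hq1, hq2, hq3⟩ := q
  refine ⟨kerSub ι q hq1 hq3, ?_, ?_⟩
  · intro a
    refine ⟨q a, (ι (q a))⁻¹ * a, ?_, by group⟩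
    show q ((ι (q a))⁻¹ * a) = 1
    rw [← map_inv, hq2, inv_mul_cancel]
  · rintro x hx ⟨b, rfl⟩
    have hb : q (ι b) = b := by
      have := hq2 b 1
      rwa [mul_one, hq1, mul_one] at this
    have hb1 : b = 1 := by rw [← hb]; exact hx
    rw [hb1, map_one]

lemma mem_toKer (q : Cocycle ι) (a : A) : a ∈ (toKer ι q).1 ↔ q.1 a = 1 := by
  obtain ⟨q, hq1, hq2, hq3⟩ := q
  exact Iff.rfl

/-- The cocycle associated to a complement. -/
noncomputable def compFun (X : Subgroup A)
    (h : ∀ a : A, ∃ (b : B), ∃ x ∈ X, a = ι b * x) (a : A) : B :=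
  (h a).choose

lemma compFun_spec (X : Subgroup A)
    (h : ∀ a : A, ∃ (b : B), ∃ x ∈ X, a = ι b * x) (a : A) :
    ∃ x ∈ X, a = ι (compFun ι X h a) * x := (h a).choose_spec

lemma compFun_uniq (hι : Function.Injective ι) (X : Subgroup A)
    (h : ∀ a : A, ∃ (b : B), ∃ x ∈ X, a = ι b * x)
    (hd : ∀ x ∈ X, x ∈ Set.range ι → x = 1)
    {a : A} {b : B} {x : A} (hx : x ∈ X) (ha : a = ι b * x) :
    compFun ι X h a = b := by
  obtain ⟨x', hx', ha'⟩ := compFun_spec ι X h a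
  have heq : ι b * x = ι (compFun ι X h a) * x' := ha.symm.trans ha'
  have h1 : x * x'⁻¹ = ι (b⁻¹ * compFun ι X h a) := by
    have hx'' : x = (ι b)⁻¹ * (ι (compFun ι X h a) * x') := by rw [← heq]; group
    rw [hx'', map_mul, map_inv]; group
  have h2 : x * x'⁻¹ = 1 := hd _ (mul_mem hx (inv_mem hx')) ⟨_, h1.symm⟩
  have h3 : b⁻¹ * compFun ι X h a = 1 := by
    apply hι; rw [← h1, h2, map_one]
  rw [eq_comm, ← inv_mul_eq_one]
  exact h3

lemma compFun_mul_mem (hι : Function.Injective ι) (X : Subgroup A)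
    (h : ∀ a : A, ∃ (b : B), ∃ x ∈ X, a = ι b * x)
    (hd : ∀ x ∈ X, x ∈ Set.range ι → x = 1)
    (c : A) {x' : A} (hx' : x' ∈ X) :
    compFun ι X h (c * x') = compFun ι X h c := by
  obtain ⟨xc, hxc, hc⟩ := compFun_spec ι X h c
  exact compFun_uniq ι hι X h hd (mul_mem hxc hx') (by rw [← mul_assoc, ← hc])

/-- Inverse map: complement to its cocycle. -/
noncomputable def ofComp (hι : Function.Injective ι) (X : Complement ι) : Cocycle ι := by
  obtain ⟨X, h, hd⟩ := X
  refine ⟨compFun ι X h, ?_, ?_, ?_⟩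
  · exact compFun_uniq ι hι X h hd (one_mem X) (by simp)
  · intro b a
    obtain ⟨x, hx, ha⟩ := compFun_spec ι X h a
    exact compFun_uniq ι hι X h hd hx (by rw [map_mul, mul_assoc, ← ha])
  · intro a a'
    obtain ⟨x', hx', ha'⟩ := compFun_spec ι X h a'
    calc compFun ι X h (a * a') = compFun ι X h ((a * ι (compFun ι X h a')) * x') := by
          rw [mul_assoc, ← ha']
      _ = compFun ι X h (a * ι (compFun ι X h a')) := compFun_mul_mem ι hι X h hd _ hx'

lemma ofComp_apply (hι : Function.Injective ι) (X : Complement ι) {a : A} {b : B} {x : A}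
    (hx : x ∈ X.1) (ha : a = ι b * x) : (ofComp ι hι X).1 a = b := by
  obtain ⟨X, h, hd⟩ := X
  exact compFun_uniq ι hι X h hd hx ha

lemma left_inv (hι : Function.Injective ι) (q : Cocycle ι) : ofComp ι hι (toKer ι q) = q := by
  obtain ⟨q, hq1, hq2, hq3⟩ := q
  ext a
  show (ofComp ι hι (toKer ι ⟨q, hq1, hq2, hq3⟩)).1 a = q a
  refine ofComp_apply ι hι _ (x := (ι (q a))⁻¹ * a) ?_ (by group)
  show q ((ι (q a))⁻¹ * a) = 1
  rw [← map_inv, hq2, inv_mul_cancel]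

lemma right_inv (hι : Function.Injective ι) (X : Complement ι) : toKer ι (ofComp ι hι X) = X := by
  obtain ⟨X, h, hd⟩ := X
  ext a
  rw [mem_toKer]
  constructor
  · intro h1
    obtain ⟨x, hx, ha⟩ := compFun_spec ι X h a
    have : compFun ι X h a = (ofComp ι hι ⟨X, h, hd⟩).1 a := rfl
    rw [this, h1, map_one, one_mul] at ha
    rwa [ha]
  · intro hmem
    exact ofComp_apply ι hι ⟨X, h, hd⟩ hmem (by rw [map_one, one_mul])

end Stmt10Aux

open Stmt10Aux in
/-- for an injective group homomorphism `ι : B → A`, the assignment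
`q ↦ Ker q` is a bijection between descent 1-cocycles and complements to `ι(B)` in `A`,
whose inverse sends a complement `X` to `q_X` with `q_X (ι b * x) = b` for `x ∈ X`. -/
theorem stmt10 {B A : Type*} [Group B] [Group A] (ι : B →* A)
    (hι : Function.Injective ι) :
    ∃ e : {q : A → B // q 1 = 1 ∧ (∀ (b : B) (a : A), q (ι b * a) = b * q a) ∧
            (∀ a a' : A, q (a * a') = q (a * ι (q a')))} ≃
          {X : Subgroup A // (∀ a : A, ∃ (b : B), ∃ x ∈ X, a = ι b * x) ∧
            (∀ x ∈ X, x ∈ Set.range ι → x = 1)},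
      (∀ q, ∀ a : A, a ∈ (e q).1 ↔ q.1 a = 1) ∧
      (∀ X, ∀ (a : A) (b : B) (x : A), x ∈ X.1 → a = ι b * x → (e.symm X).1 a = b) := by
  refine ⟨⟨toKer ι, ofComp ι hι, left_inv ι hι, right_inv ι hι⟩, ?_, ?_⟩
  · exact mem_toKer ι
  · intro X a b x hx ha
    exact ofComp_apply ι hι X hx ha
end

section
/- Let ι : B → A be an injective group homomorphism and let q, q' : A → B be two descent 1-cocycles (maps satisfying (ZL1), (ZL2), (ZL3)). If there exists b₀ ∈ B with q(a)·b₀ = q'(a·ι(b₀)) for all a ∈ A, then Ker(q) = ι(b₀)·Ker(q')·ι(b₀)⁻¹. -/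
/-- if two descent 1-cocycles `q, q'` satisfy `q a * b₀ = q' (a * ι b₀)`
for all `a`, then `Ker q = ι b₀ · Ker q' · (ι b₀)⁻¹`. -/
theorem stmt12 {B A : Type*} [Group B] [Group A] (ι : B →* A)
    (hι : Function.Injective ι) (q q' : A → B)
    (hq1 : q 1 = 1) (hq2 : ∀ (b : B) (a : A), q (ι b * a) = b * q a)
    (hq3 : ∀ a a' : A, q (a * a') = q (a * ι (q a')))
    (hq'1 : q' 1 = 1) (hq'2 : ∀ (b : B) (a : A), q' (ι b * a) = b * q' a)
    (hq'3 : ∀ a a' : A, q' (a * a') = q' (a * ι (q' a')))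
    (b₀ : B) (h : ∀ a : A, q a * b₀ = q' (a * ι b₀)) :
    {a : A | q a = 1} = (fun c : A => ι b₀ * c * (ι b₀)⁻¹) '' {a : A | q' a = 1} := by
  ext a
  simp only [Set.mem_setOf_eq, Set.mem_image]
  constructor
  · intro ha
    refine ⟨(ι b₀)⁻¹ * a * ι b₀, ?_, by group⟩
    have key : b₀ * q' ((ι b₀)⁻¹ * a * ι b₀) = q a * b₀ := by
      rw [h a, ← hq'2 b₀ ((ι b₀)⁻¹ * a * ι b₀)]
      congr 1
      group
    have : b₀ * q' ((ι b₀)⁻¹ * a * ι b₀) = b₀ := by rw [key, ha, one_mul]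
    simpa using this
  · rintro ⟨c, hc, rfl⟩
    have key : q (ι b₀ * c * (ι b₀)⁻¹) * b₀ = b₀ := by
      rw [h]
      have : ι b₀ * c * (ι b₀)⁻¹ * ι b₀ = ι b₀ * c := by group
      rw [this, hq'2, hc, mul_one]
    simpa using key
end

section
/- Let ι : B → A be an injective group homomorphism and q, q' : A → B two descent 1-cocycles. If Ker(q') = ι(b₀)⁻¹·Ker(q)·ι(b₀) for some b₀ ∈ B, then q(a)·b₀ = q'(a·ι(b₀)) for all a ∈ A. Hence two descent 1-cocycles are equivalent (via some b₀ ∈ B) if and only if their kernels are conjugate in A by an element of ι(B). -/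
/-!
Left equivariance `q (ι b * a) = b * q a` alone makes `q a = b` equivalent to
`ι b⁻¹ * a ∈ Ker q`, so `q` is determined by its kernel. Since `ι (q a * b₀)⁻¹ * (a * ι b₀)`
is the `(ι b₀)⁻¹`-conjugate of `ι (q a)⁻¹ * a ∈ Ker q`, conjugate kernels force
`q' (a * ι b₀) = q a * b₀`; conversely this identity transports `Ker q'` onto `Ker q` by the
same conjugation.
-/

section ConjImage

variable {A : Type*} [Group A]

lemma image_conj_inv_of_eq_image_conj {s t : Set A} {g : A}
    (h : s = (fun c => g * c * g⁻¹) '' t) : t = (fun c => g⁻¹ * c * g) '' s := by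
  rw [h, Set.image_image]
  simp only [mul_assoc, inv_mul_cancel_left, inv_mul_cancel, mul_one, Set.image_id']

end ConjImage

section LeftEquivariant

variable {B A : Type*} [Group B] [Group A] (ι : B →* A) {q q' : A → B}

lemma eq_iff_map_inv_mul_eq_one (hq : ∀ (b : B) (a : A), q (ι b * a) = b * q a)
    (a : A) (b : B) :
    q a = b ↔ q (ι b⁻¹ * a) = 1 := by
  rw [hq, inv_mul_eq_one, eq_comm]

lemma map_mul_eq_of_ker_eq_conj (hq : ∀ (b : B) (a : A), q (ι b * a) = b * q a)
    (hq' : ∀ (b : B) (a : A), q' (ι b * a) = b * q' a) {b₀ : B}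
    (hK : {a : A | q' a = 1} = (fun c : A => (ι b₀)⁻¹ * c * ι b₀) '' {a : A | q a = 1})
    (a : A) : q a * b₀ = q' (a * ι b₀) := by
  refine ((eq_iff_map_inv_mul_eq_one ι hq' _ _).2 ?_).symm
  have hker : q (ι (q a)⁻¹ * a) = 1 := (eq_iff_map_inv_mul_eq_one ι hq a (q a)).1 rfl
  have hconj : ι (q a * b₀)⁻¹ * (a * ι b₀) = (ι b₀)⁻¹ * (ι (q a)⁻¹ * a) * ι b₀ := by
    simp only [mul_inv_rev, map_mul, map_inv, mul_assoc]
  change ι (q a * b₀)⁻¹ * (a * ι b₀) ∈ {a : A | q' a = 1}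
  rw [hK, hconj]
  exact Set.mem_image_of_mem _ hker

lemma ker_eq_conj_image_ker (hq' : ∀ (b : B) (a : A), q' (ι b * a) = b * q' a) {b₀ : B}
    (h : ∀ a : A, q a * b₀ = q' (a * ι b₀)) :
    {a : A | q a = 1} = (fun c : A => ι b₀ * c * (ι b₀)⁻¹) '' {a : A | q' a = 1} := by
  rw [Set.image_eq_preimage_of_inverse (g := fun c => (ι b₀)⁻¹ * c * ι b₀)
    (fun c => by group) (fun c => by group)]
  ext a
  simp only [Set.mem_ofPred_eq, Set.mem_preimage, mul_assoc, ← map_inv, hq', ← h]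
  rw [inv_mul_eq_one, right_eq_mul]

end LeftEquivariant

theorem stmt13_general {B A : Type*} [Group B] [Group A] (ι : B →* A)
    (q q' : A → B)
    (hq2 : ∀ (b : B) (a : A), q (ι b * a) = b * q a)
    (hq'2 : ∀ (b : B) (a : A), q' (ι b * a) = b * q' a) :
    (∀ b₀ : B,
      {a : A | q' a = 1} = (fun c : A => (ι b₀)⁻¹ * c * ι b₀) '' {a : A | q a = 1} →
      ∀ a : A, q a * b₀ = q' (a * ι b₀)) ∧
    ((∃ b₀ : B, ∀ a : A, q a * b₀ = q' (a * ι b₀)) ↔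
      (∃ b₀ : B,
        {a : A | q a = 1} = (fun c : A => ι b₀ * c * (ι b₀)⁻¹) '' {a : A | q' a = 1})) :=
  ⟨fun _ => map_mul_eq_of_ker_eq_conj ι hq2 hq'2,
    ⟨fun ⟨b₀, h⟩ => ⟨b₀, ker_eq_conj_image_ker ι hq'2 h⟩,
      fun ⟨b₀, hK⟩ =>
        ⟨b₀, map_mul_eq_of_ker_eq_conj ι hq2 hq'2 (image_conj_inv_of_eq_image_conj hK)⟩⟩⟩

/-- if `Ker q' = (ι b₀)⁻¹ · Ker q · ι b₀` then `q a * b₀ = q' (a * ι b₀)`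
for all `a`; hence two descent 1-cocycles are equivalent iff their kernels are conjugate
in `A` by an element of `ι(B)`. -/
theorem stmt13 {B A : Type*} [Group B] [Group A] (ι : B →* A)
    (hι : Function.Injective ι) (q q' : A → B)
    (hq1 : q 1 = 1) (hq2 : ∀ (b : B) (a : A), q (ι b * a) = b * q a)
    (hq3 : ∀ a a' : A, q (a * a') = q (a * ι (q a')))
    (hq'1 : q' 1 = 1) (hq'2 : ∀ (b : B) (a : A), q' (ι b * a) = b * q' a)
    (hq'3 : ∀ a a' : A, q' (a * a') = q' (a * ι (q' a'))) :
    (∀ b₀ : B,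
      {a : A | q' a = 1} = (fun c : A => (ι b₀)⁻¹ * c * ι b₀) '' {a : A | q a = 1} →
      ∀ a : A, q a * b₀ = q' (a * ι b₀)) ∧
    ((∃ b₀ : B, ∀ a : A, q a * b₀ = q' (a * ι b₀)) ↔
      (∃ b₀ : B,
        {a : A | q a = 1} = (fun c : A => ι b₀ * c * (ι b₀)⁻¹) '' {a : A | q' a = 1})) :=
  stmt13_general ι q q' hq2 hq'2
end

section
/- Let X be a monoid acting on a monoid B by endomorphisms and q' : X → B a map with q'(1)=1 and q'(x₁x₂) = (x₁ ⋆ q'(x₂))·q'(x₁). Then the map q̂ : B ⋊ X → B defined by q̂(b,x) = b·q'(x) satisfies q̂(1,1)=1, q̂(b₁·(b₂,x)) = b₁·q̂(b₂,x) (where b₁·(b₂,x)=(b₁b₂,x)), and q̂(a·a') = q̂(a·ι_B(q̂(a'))) for all a, a' ∈ B ⋊ X, where ι_B(b) = (b,1). -/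
/-- if `q' : X → B` satisfies `q' 1 = 1` and
`q'(x₁x₂) = (x₁ ⋆ q' x₂)·q' x₁`, then `q̂ (b,x) = b · q' x` satisfies the descent
1-cocycle conditions on the semidirect product `B ⋊ X` (with multiplication
`(b₁,x₁)(b₂,x₂) = (b₁·(x₁⋆b₂), x₁x₂)` and `ι_B b = (b,1)`). -/
theorem stmt17 {X B : Type*} [Monoid X] [Monoid B] (star : X → B → B)
    (h_one_act : ∀ b : B, star 1 b = b)
    (h_mul_act : ∀ (x₁ x₂ : X) (b : B), star (x₁ * x₂) b = star x₁ (star x₂ b))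
    (h_act_one : ∀ x : X, star x 1 = 1)
    (h_act_mul : ∀ (x : X) (b₁ b₂ : B), star x (b₁ * b₂) = star x b₁ * star x b₂)
    (mul : B × X → B × X → B × X)
    (hmul : ∀ p p' : B × X, mul p p' = (p.1 * star p.2 p'.1, p.2 * p'.2))
    (q' : X → B) (hq'1 : q' 1 = 1)
    (hq'c : ∀ x₁ x₂ : X, q' (x₁ * x₂) = star x₁ (q' x₂) * q' x₁)
    (qhat : B × X → B) (hqhat : ∀ p : B × X, qhat p = p.1 * q' p.2) :
    qhat (1, 1) = 1 ∧
      (∀ (b₁ : B) (p : B × X), qhat (b₁ * p.1, p.2) = b₁ * qhat p) ∧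
      (∀ p p' : B × X, qhat (mul p p') = qhat (mul p (qhat p', 1))) := by
  refine ⟨by simp [hqhat, hq'1], fun b₁ p => by simp [hqhat, mul_assoc], fun p p' => by
    simp [hqhat, hmul, hq'c, h_act_mul, mul_assoc]⟩
end

section
/- Let f : K → M and g : L → M be group homomorphisms with f(K) ⊆ g(L), P = K ×_M L the pullback, B = Ker(g) embedded in P via ι(l) = (1,l). Then the assignment h ↦ q_h, q_h(k,l) = l·h(k)⁻¹, is a bijection between the set of group homomorphisms h : K → L with g∘h = f and the set of maps q : P → B satisfying the descent 1-cocycle conditions (q(1)=1, q(ι(l)·p)=l·q(p), q(p·p')=q(p·ι(q(p')))). -/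
/-- The pullback (fiber product) `K ×_M L` of `f : K → M` and `g : L → M`,
as a subgroup of `K × L`. -/
def fiberProd {K L M : Type*} [Group K] [Group L] [Group M]
    (f : K →* M) (g : L →* M) : Subgroup (K × L) where
  carrier := {p | f p.1 = g p.2}
  one_mem' := by simp
  mul_mem' := by
    intro a b ha hb
    simp only [Set.mem_setOf_eq, Prod.fst_mul, Prod.snd_mul, map_mul] at *
    rw [ha, hb]
  inv_mem' := by
    intro a ha
    simp only [Set.mem_setOf_eq, Prod.fst_inv, Prod.snd_inv, map_inv] at *
    rw [ha]

/-- The embedding of `Ker g` into the pullback `K ×_M L`, `l ↦ (1, l)`. -/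
def kerIota {K L M : Type*} [Group K] [Group L] [Group M]
    (f : K →* M) (g : L →* M) (l : g.ker) : fiberProd f g :=
  ⟨((1 : K), (l : L)), by
    simp [fiberProd, MonoidHom.mem_ker.mp l.2]⟩

/-!
A lifting `h` of `f` through `g` gives the cocycle `q_h (k, l) = l * (h k)⁻¹`. Conversely, a
cocycle `q` makes `(k, l) ↦ (q (k, l))⁻¹ * l` a homomorphism `K ×_M L →* L` that kills the kernel
`ι (Ker g)` of the first projection; since `f(K) ⊆ g(L)` that projection is onto `K`, so the
homomorphism descends to a lifting `K →* L`. The two constructions are inverse to each other.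
-/

namespace fiberProd

variable {K L M : Type*} [Group K] [Group L] [Group M] {f : K →* M} {g : L →* M}

theorem map_fst_eq (p : fiberProd f g) : f (p : K × L).1 = g (p : K × L).2 := p.2

@[simp]
theorem coe_kerIota (l : g.ker) : (kerIota f g l : K × L) = (1, (l : L)) := rfl

variable (f g) in
def fst : fiberProd f g →* K := (MonoidHom.fst K L).comp (fiberProd f g).subtype

@[simp]
theorem fst_apply (p : fiberProd f g) : fst f g p = (p : K × L).1 := rfl

theorem fst_surjective (hrange : f.range ≤ g.range) : Function.Surjective (fst f g) := by
  intro k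
  obtain ⟨l, hl⟩ := hrange ⟨k, rfl⟩
  exact ⟨⟨(k, l), hl.symm⟩, rfl⟩

theorem eq_kerIota_of_mem_ker_fst {p : fiberProd f g} (hp : p ∈ (fst f g).ker) :
    ∃ l : g.ker, p = kerIota f g l := by
  have hk : (p : K × L).1 = 1 := hp
  refine ⟨⟨(p : K × L).2, ?_⟩, Subtype.ext (Prod.ext hk rfl)⟩
  rw [MonoidHom.mem_ker, ← map_fst_eq, hk, map_one]

theorem mul_kerIota (p : fiberProd f g) (l : g.ker) :
    p * kerIota f g l =
      kerIota f g ⟨(p : K × L).2 * l * (p : K × L).2⁻¹, g.normal_ker.conj_mem _ l.2 _⟩ * p :=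
  Subtype.ext (Prod.ext (by simp) (by simp))

end fiberProd

open fiberProd

section DescentCocycle

variable {K L M : Type*} [Group K] [Group L] [Group M] {f : K →* M} {g : L →* M}

def IsDescentCocycle (q : fiberProd f g → g.ker) : Prop :=
  q 1 = 1 ∧
    (∀ (l : g.ker) (p : fiberProd f g), q (kerIota f g l * p) = l * q p) ∧
    ∀ p p' : fiberProd f g, q (p * p') = q (p * kerIota f g (q p'))

namespace IsDescentCocycle

variable {q : fiberProd f g → g.ker}

theorem apply_one (hq : IsDescentCocycle q) : q 1 = 1 := hq.1

theorem apply_kerIota_mul (hq : IsDescentCocycle q) (l : g.ker) (p : fiberProd f g) :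
    q (kerIota f g l * p) = l * q p := hq.2.1 l p

theorem apply_mul (hq : IsDescentCocycle q) (p p' : fiberProd f g) :
    q (p * p') = q (p * kerIota f g (q p')) :=
  hq.2.2 p p'

theorem coe_apply_mul_kerIota (hq : IsDescentCocycle q) (p : fiberProd f g) (l : g.ker) :
    (q (p * kerIota f g l) : L) = (p : K × L).2 * l * (p : K × L).2⁻¹ * q p := by
  rw [mul_kerIota, hq.apply_kerIota_mul, Subgroup.coe_mul]

def toHom (hq : IsDescentCocycle q) : fiberProd f g →* L :=
  MonoidHom.mk' (fun p => (q p : L)⁻¹ * (p : K × L).2) fun p p' => by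
    simp only [hq.apply_mul p p', hq.coe_apply_mul_kerIota, Subgroup.coe_mul, Prod.snd_mul]
    group

theorem toHom_apply (hq : IsDescentCocycle q) (p : fiberProd f g) :
    hq.toHom p = (q p : L)⁻¹ * (p : K × L).2 := rfl

theorem ker_fst_le_ker_toHom (hq : IsDescentCocycle q) : (fst f g).ker ≤ hq.toHom.ker := by
  intro p hp
  obtain ⟨l, rfl⟩ := eq_kerIota_of_mem_ker_fst hp
  rw [MonoidHom.mem_ker, toHom_apply, ← mul_one (kerIota f g l), hq.apply_kerIota_mul,
    hq.apply_one]
  simp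

end IsDescentCocycle

variable (f g) in
def Liftings : Type _ := {h : K →* L // ∀ k : K, g (h k) = f k}

variable (f g) in
def DescentCocycles : Type _ := {q : fiberProd f g → g.ker // IsDescentCocycle q}

def Liftings.toCocycle (h : Liftings f g) : DescentCocycles f g where
  val p := ⟨(p : K × L).2 * (h.1 (p : K × L).1)⁻¹, by
    simp [MonoidHom.mem_ker, h.2, ← map_fst_eq]⟩
  property := by
    refine ⟨?_, fun l p => ?_, fun p p' => ?_⟩ <;> ext <;> simp [mul_assoc]

theorem Liftings.coe_toCocycle_apply (h : Liftings f g) (p : fiberProd f g) :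
    (h.toCocycle.1 p : L) = (p : K × L).2 * (h.1 (p : K × L).1)⁻¹ := rfl

noncomputable def DescentCocycles.toLifting (hrange : f.range ≤ g.range)
    (q : DescentCocycles f g) : Liftings f g where
  val := (fst f g).liftOfSurjective (fst_surjective hrange)
    ⟨q.2.toHom, q.2.ker_fst_le_ker_toHom⟩
  property k := by
    obtain ⟨p, rfl⟩ := fst_surjective hrange k
    have hqp : g (q.1 p) = 1 := (q.1 p).2
    rw [MonoidHom.liftOfRightInverse_comp_apply, IsDescentCocycle.toHom_apply, map_mul, map_inv,
      hqp, inv_one, one_mul, fst_apply, map_fst_eq]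

theorem DescentCocycles.toLifting_fst (hrange : f.range ≤ g.range) (q : DescentCocycles f g)
    (p : fiberProd f g) :
    (q.toLifting hrange).1 (fst f g p) = (q.1 p : L)⁻¹ * (p : K × L).2 :=
  MonoidHom.liftOfRightInverse_comp_apply _ _ _ _ p

noncomputable def liftingsEquivDescentCocycles (hrange : f.range ≤ g.range) :
    Liftings f g ≃ DescentCocycles f g where
  toFun := Liftings.toCocycle
  invFun := DescentCocycles.toLifting hrange
  left_inv h := by
    refine Subtype.ext (MonoidHom.ext fun k => ?_)
    obtain ⟨p, rfl⟩ := fst_surjective hrange k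
    rw [DescentCocycles.toLifting_fst, Liftings.coe_toCocycle_apply, fst_apply]
    group
  right_inv q := by
    refine Subtype.ext (funext fun p => Subtype.ext ?_)
    rw [Liftings.coe_toCocycle_apply]
    change _ * ((q.toLifting hrange).1 (fst f g p))⁻¹ = _
    rw [DescentCocycles.toLifting_fst]
    group

end DescentCocycle

/-- if `f(K) ⊆ g(L)`, the assignment `h ↦ q_h`, with
`q_h (k, l) = l * (h k)⁻¹`, is a bijection between homomorphisms `h : K → L` with
`g ∘ h = f` and descent 1-cocycles `q : K ×_M L → Ker g`. -/
theorem stmt19 {K L M : Type*} [Group K] [Group L] [Group M]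
    (f : K →* M) (g : L →* M) (hrange : f.range ≤ g.range) :
    ∃ e : {h : K →* L // ∀ k : K, g (h k) = f k} ≃
          {q : fiberProd f g → g.ker //
            q 1 = 1 ∧
            (∀ (l : g.ker) (p : fiberProd f g), q (kerIota f g l * p) = l * q p) ∧
            (∀ p p' : fiberProd f g, q (p * p') = q (p * kerIota f g (q p')))},
      ∀ (h : {h : K →* L // ∀ k : K, g (h k) = f k}) (p : fiberProd f g),
        ((e h).1 p : L) = (p : K × L).2 * (h.1 (p : K × L).1)⁻¹ :=
  ⟨liftingsEquivDescentCocycles hrange, Liftings.coe_toCocycle_apply⟩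
end
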